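/- If l is the length of the lattice Λ(H) (the cardinality of its longest chain minus one) and X is finite, then the ambiguous Littlestone dimension of H satisfies AL(H) ≤ l·|X|. In particular AL(H) ≤ |Y|·|X|. -/

import Mathlib

/-- A `Y`-lattice: a family of subsets of `Y` containing `Y` itself and closed
under binary intersections. -/
def IsYLattice {Y : Type} (L : Set (Set Y)) : Prop :=
  Set.univ ∈ L ∧ ∀ A ∈ L, ∀ B ∈ L, A ∩ B ∈ L

/-- The `Λ`-hull of `A`: the intersection of all members of `Λ` containing `A`. -/
def latHull {Y : Type} (L : Set (Set Y)) (A : Set Y) : Set Y :=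
  ⋂₀ {B | B ∈ L ∧ A ⊆ B}

/-- The `Λ`-complexity of `A`: minimal cardinality of `B ⊆ A` with `A ⊆ hull(B)`. -/
noncomputable def latComplexity {Y : Type} (L : Set (Set Y)) (A : Set Y) : ℕ :=
  sInf {n : ℕ | ∃ B : Set Y, B ⊆ A ∧ B.ncard = n ∧ A ⊆ latHull L B}

/-- The pivot dimension of `Λ`: maximal `Λ`-complexity of an element of `Λ`. -/
noncomputable def PDim {Y : Type} (L : Set (Set Y)) : ℕ :=
  sSup {n : ℕ | ∃ A ∈ L, n = latComplexity L A}

/-- `Λ` shatters `S` if every subset of `S` is a trace `S ∩ C` for some `C ∈ Λ`. -/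
def Shatters {Y : Type} (L : Set (Set Y)) (S : Set Y) : Prop :=
  ∀ B ⊆ S, ∃ C ∈ L, S ∩ C = B

/-- VC dimension of the family `Λ`. -/
noncomputable def VCdim {Y : Type} (L : Set (Set Y)) : ℕ :=
  sSup {n : ℕ | ∃ S : Set Y, Shatters L S ∧ S.ncard = n}

/-- `Λ(H)`: the minimal `Y`-lattice containing every value `h x` for `h ∈ H`. -/
def LamH {X Y : Type} (H : Set (X → Set Y)) : Set (Set Y) :=
  {A | ∀ L : Set (Set Y), IsYLattice L → (∀ h ∈ H, ∀ x : X, h x ∈ L) → A ∈ L}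

/-- A finite rooted tree: vertices, a root, and a parent map under which every
vertex reaches the root. -/
structure RTree where
  V : Type
  [fin : Fintype V]
  root : V
  parent : V → V
  parent_root : parent root = root
  reaches : ∀ v : V, ∃ k : ℕ, parent^[k] v = root

namespace RTree

/-- Children of a vertex (the root is not a child of anything). -/
def children (t : RTree) (v : t.V) : Set t.V := {w | t.parent w = v ∧ w ≠ t.root}

def IsLeaf (t : RTree) (v : t.V) : Prop := t.children v = ∅

/-- `a` is an ancestor (or equal to) `u`. -/
def Anc (t : RTree) (a u : t.V) : Prop := ∃ k : ℕ, t.parent^[k] u = a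

noncomputable def depthOf (t : RTree) (v : t.V) : ℕ := sInf {k : ℕ | t.parent^[k] v = t.root}

noncomputable def depth (t : RTree) : ℕ := sSup {n : ℕ | ∃ v : t.V, n = t.depthOf v}

end RTree

/-- An ambiguous shattered `H`-tree: internal vertices carry instances, non-root
vertices (identified with the edges to their parents) carry labels, distinct among
siblings, leaves carry hypotheses from `H` compatible with all edge labels above
them, and `E0` selects exactly one child edge of each internal vertex. -/
structure AmbTree (X Y : Type) (H : Set (X → Set Y)) where
  t : RTree
  xlab : t.V → X
  ylab : t.V → Y
  hlab : t.V → (X → Set Y)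
  E0 : Set t.V
  e0_ne_root : ∀ a ∈ E0, a ≠ t.root
  e0_unique : ∀ v : t.V, (t.children v).Nonempty → ∃! a : t.V, a ∈ t.children v ∩ E0
  sib_distinct : ∀ a b : t.V, a ≠ t.root → b ≠ t.root →
    t.parent a = t.parent b → a ≠ b → ylab a ≠ ylab b
  hlab_mem : ∀ u : t.V, t.IsLeaf u → hlab u ∈ H
  path_mem : ∀ u a : t.V, t.IsLeaf u → t.Anc a u → a ≠ t.root →
    ylab a ∈ hlab u (xlab (t.parent a))

namespace AmbTree

variable {X Y : Type} {H : Set (X → Set Y)}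

/-- Edge `a` (on the root-to-`u` path) is relevant to leaf `u`. -/
def Relevant (T : AmbTree X Y H) (a u : T.t.V) : Prop :=
  a ≠ T.t.root ∧ T.t.Anc a u ∧
    (a ∉ T.E0 ∨ ∃ b : T.t.V, T.t.parent b = T.t.parent a ∧ b ≠ T.t.root ∧
      T.ylab b ∉ T.hlab u (T.xlab (T.t.parent a)))

noncomputable def relCount (T : AmbTree X Y H) (u : T.t.V) : ℕ :=
  {a : T.t.V | T.Relevant a u}.ncard

/-- Rank: the minimum over leaves of the number of relevant edges. -/
noncomputable def rank (T : AmbTree X Y H) : ℕ :=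
  sInf {n : ℕ | ∃ u : T.t.V, T.t.IsLeaf u ∧ n = T.relCount u}

noncomputable def depth (T : AmbTree X Y H) : ℕ := T.t.depth

end AmbTree

/-!
Descend greedily from the root: at a vertex `v` with instance `x`, follow an edge whose label
lies outside `G(v) = ⋂ {h_u x | u a leaf below v}` if there is one, and the `E₀`-edge otherwise.
At the leaf `u` reached, an edge `a` relevant to `u` has its label outside `G(parent a)` but
inside `G(a)` (both at the instance of `parent a`), so `G` grows strictly across `a`. Since `G`
only grows down the path and its values lie in `Λ(H)`, the sets `G(parent a)` of the relevant
edges `a` with a common instance have distinct heights in `Λ(H)`, all below `l`.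
-/

attribute [instance] RTree.fin

open Order

def ChainsLengthLE {Y : Type} (L : Set (Set Y)) (l : ℕ) : Prop :=
  ∀ (k : ℕ) (c : Fin (k + 1) → Set Y), (∀ i, c i ∈ L) → StrictMono c → k ≤ l

namespace ChainsLengthLE

variable {Y : Type} {L : Set (Set Y)} {l : ℕ}

lemma height_le (hl : ChainsLengthLE L l) (A : L) : height A ≤ l :=
  Order.height_le fun p _ => by
    exact_mod_cast hl p.length (fun i => p i) (fun i => (p i).2)
      (Subtype.strictMono_coe _ |>.comp p.strictMono)

lemma height_ne_top (hl : ChainsLengthLE L l) (A : L) : height A ≠ ⊤ :=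
  ne_top_of_le_ne_top (ENat.natCast_ne_top l) (hl.height_le A)

lemma toNat_height_le (hl : ChainsLengthLE L l) (A : L) : (height A).toNat ≤ l :=
  ENat.toNat_le_of_le_natCast (hl.height_le A)

lemma toNat_height_mono (hl : ChainsLengthLE L l) {A B : L} (h : A ≤ B) :
    (height A).toNat ≤ (height B).toNat :=
  ENat.toNat_le_toNat (height_mono h) (hl.height_ne_top B)

lemma toNat_height_lt_toNat_height (hl : ChainsLengthLE L l) {A B : L} (h : A < B) :
    (height A).toNat < (height B).toNat :=
  calc (height A).toNat < (height A + 1).toNat := by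
        rw [ENat.toNat_add (hl.height_ne_top A) ENat.one_ne_top, ENat.toNat_one]
        exact Nat.lt_succ_self _
    _ ≤ (height B).toNat := ENat.toNat_le_toNat (height_add_one_le h) (hl.height_ne_top B)

end ChainsLengthLE

lemma chainsLengthLE_card {Y : Type} [Fintype Y] (L : Set (Set Y)) :
    ChainsLengthLE L (Fintype.card Y) := by
  intro k c _ hc
  let p : LTSeries ℕ := LTSeries.mk k (Set.ncard ∘ c) (Set.ncard_strictMono.comp hc)
  calc k ≤ p.head + p.length := Nat.le_add_left _ _
    _ ≤ p.last := p.head_add_length_le_nat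
    _ ≤ Nat.card Y := Set.ncard_le_card _
    _ = Fintype.card Y := Nat.card_eq_fintype_card

lemma IsYLattice.biInter_mem {Y ι : Type} {L : Set (Set Y)} (hL : IsYLattice L) {s : Set ι}
    (hs : s.Finite) {f : ι → Set Y} (hf : ∀ i ∈ s, f i ∈ L) : ⋂ i ∈ s, f i ∈ L := by
  simpa [Finset.inf_eq_iInf] using
    Finset.inf_mem L hL.1 hL.2 hs.toFinset f (by simpa using hf)

section LamH

variable {X Y : Type}

lemma isYLattice_lamH (H : Set (X → Set Y)) : IsYLattice (LamH H) :=
  ⟨fun _ hL _ => hL.1, fun _ hA _ hB L hL hH => hL.2 _ (hA L hL hH) _ (hB L hL hH)⟩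

lemma apply_mem_lamH {H : Set (X → Set Y)} {h : X → Set Y} (hh : h ∈ H) (x : X) :
    h x ∈ LamH H :=
  fun _ _ hH => hH h hh x

end LamH

namespace RTree

variable {t : RTree} {a b c u : t.V}

lemma Anc.trans (hab : t.Anc a b) (hbc : t.Anc b c) : t.Anc a c := by
  obtain ⟨k, rfl⟩ := hab
  obtain ⟨m, rfl⟩ := hbc
  exact ⟨k + m, Function.iterate_add_apply _ _ _ _⟩

lemma anc_parent_self (a : t.V) : t.Anc (t.parent a) a := ⟨1, rfl⟩

lemma Anc.parent (h : t.Anc a u) : t.Anc (t.parent a) u := (anc_parent_self a).trans h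

lemma Anc.eq_or_anc_parent (h : t.Anc a c) : a = c ∨ t.Anc a (t.parent c) := by
  obtain ⟨_ | k, rfl⟩ := h
  · exact Or.inl rfl
  · exact Or.inr ⟨k, rfl⟩

lemma Anc.eq_root (h : t.Anc a t.root) : a = t.root := by
  obtain ⟨k, rfl⟩ := h
  exact Function.iterate_fixed t.parent_root k

lemma anc_total (ha : t.Anc a u) (hb : t.Anc b u) : t.Anc a b ∨ t.Anc b a := by
  obtain ⟨k, rfl⟩ := ha
  obtain ⟨m, rfl⟩ := hb
  rcases le_total k m with h | h
  · exact Or.inr ⟨m - k, by rw [← Function.iterate_add_apply, Nat.sub_add_cancel h]⟩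
  · exact Or.inl ⟨k - m, by rw [← Function.iterate_add_apply, Nat.sub_add_cancel h]⟩

lemma depthOf_parent_lt (ha : a ≠ t.root) : t.depthOf (t.parent a) < t.depthOf a := by
  have hroot : t.parent^[t.depthOf a] a = t.root := Nat.sInf_mem (t.reaches a)
  obtain ⟨m, hm⟩ : ∃ m, t.depthOf a = m + 1 :=
    Nat.exists_eq_succ_of_ne_zero fun h0 => ha (by rwa [h0] at hroot)
  rw [hm, Function.iterate_succ_apply] at hroot
  exact hm ▸ Nat.lt_succ_of_le (Nat.sInf_le hroot)

end RTree

namespace AmbTree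

variable {X Y : Type} {H : Set (X → Set Y)} (T : AmbTree X Y H)

/-- The set `G(v)` of the proof, at the instance `x`. -/
def meetBelow (v : T.t.V) (x : X) : Set Y :=
  ⋂ u ∈ {u | T.t.IsLeaf u ∧ T.t.Anc v u}, T.hlab u x

lemma meetBelow_mem_lamH (v : T.t.V) (x : X) : T.meetBelow v x ∈ LamH H :=
  (isYLattice_lamH H).biInter_mem (Set.toFinite _) fun u hu =>
    apply_mem_lamH (T.hlab_mem u hu.1) x

lemma meetBelow_subset_hlab {v u : T.t.V} (hu : T.t.IsLeaf u) (hvu : T.t.Anc v u) (x : X) :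
    T.meetBelow v x ⊆ T.hlab u x :=
  Set.biInter_subset_of_mem (t := fun u => T.hlab u x) ⟨hu, hvu⟩

lemma meetBelow_mono {v w : T.t.V} (h : T.t.Anc v w) (x : X) :
    T.meetBelow v x ⊆ T.meetBelow w x :=
  Set.biInter_subset_biInter_left fun _ hu => ⟨hu.1, h.trans hu.2⟩

lemma ylab_mem_meetBelow {a : T.t.V} (ha : a ≠ T.t.root) :
    T.ylab a ∈ T.meetBelow a (T.xlab (T.t.parent a)) :=
  Set.mem_iInter₂.2 fun u hu => T.path_mem u a hu.1 hu.2 ha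

/-- The edge `a` is a possible step of the greedy descent. -/
def IsGreedy (a : T.t.V) : Prop :=
  T.ylab a ∉ T.meetBelow (T.t.parent a) (T.xlab (T.t.parent a)) ∨
    a ∈ T.E0 ∧ ∀ b ∈ T.t.children (T.t.parent a),
      T.ylab b ∈ T.meetBelow (T.t.parent a) (T.xlab (T.t.parent a))

lemma exists_isGreedy_child {v : T.t.V} (hv : (T.t.children v).Nonempty) :
    ∃ a ∈ T.t.children v, T.IsGreedy a := by
  by_cases hout : ∃ b ∈ T.t.children v, T.ylab b ∉ T.meetBelow v (T.xlab v)
  · obtain ⟨b, hb, hby⟩ := hout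
    exact ⟨b, hb, Or.inl (hb.1 ▸ hby)⟩
  · push Not at hout
    obtain ⟨a, ⟨ha, haE⟩, -⟩ := T.e0_unique v hv
    exact ⟨a, ha, Or.inr ⟨haE, ha.1 ▸ hout⟩⟩

lemma exists_leaf_forall_isGreedy :
    ∃ u, T.t.IsLeaf u ∧ ∀ a, T.t.Anc a u → a ≠ T.t.root → T.IsGreedy a := by
  classical
  let S := Finset.univ.filter fun v => ∀ a, T.t.Anc a v → a ≠ T.t.root → T.IsGreedy a
  have hroot : T.t.root ∈ S :=
    Finset.mem_filter.2 ⟨Finset.mem_univ _, fun a ha hne => absurd ha.eq_root hne⟩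
  obtain ⟨v, hvS, hmax⟩ := S.exists_max_image T.t.depthOf ⟨_, hroot⟩
  refine ⟨v, ?_, (Finset.mem_filter.1 hvS).2⟩
  by_contra hleaf
  obtain ⟨c, hc, hcg⟩ := T.exists_isGreedy_child (Set.nonempty_iff_ne_empty.2 hleaf)
  have hcS : c ∈ S := by
    refine Finset.mem_filter.2 ⟨Finset.mem_univ _, fun a hac hne => ?_⟩
    rcases hac.eq_or_anc_parent with rfl | hav
    · exact hcg
    · exact (Finset.mem_filter.1 hvS).2 a (hc.1 ▸ hav) hne
  have := RTree.depthOf_parent_lt hc.2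
  rw [hc.1] at this
  exact (hmax c hcS).not_gt this

lemma meetBelow_parent_ssubset {u a : T.t.V} (hu : T.t.IsLeaf u) (hg : T.IsGreedy a)
    (hrel : T.Relevant a u) :
    T.meetBelow (T.t.parent a) (T.xlab (T.t.parent a)) ⊂
      T.meetBelow a (T.xlab (T.t.parent a)) := by
  obtain ⟨hroot, hau, hrel⟩ := hrel
  refine (Set.ssubset_iff_of_subset (T.meetBelow_mono (RTree.anc_parent_self a) _)).2
    ⟨T.ylab a, T.ylab_mem_meetBelow hroot, ?_⟩
  rcases hg with hout | ⟨haE, hall⟩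
  · exact hout
  · exfalso
    rcases hrel with haE' | ⟨b, hb, hbroot, hbout⟩
    · exact haE' haE
    · exact hbout (T.meetBelow_subset_hlab hu hau.parent _ (hall b ⟨hb, hbroot⟩))

/-- The height in `Λ(H)` of `G(v)`, taken at the instance of the edge `a`. -/
noncomputable def level (v a : T.t.V) : ℕ :=
  (height (⟨T.meetBelow v (T.xlab (T.t.parent a)), T.meetBelow_mem_lamH _ _⟩ : LamH H)).toNat

section Level

variable {T} {l : ℕ} {u : T.t.V}

lemma level_parent_lt_level (hl : ChainsLengthLE (LamH H) l) (hu : T.t.IsLeaf u)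
    (hg : ∀ a, T.t.Anc a u → a ≠ T.t.root → T.IsGreedy a) {a : T.t.V}
    (hrel : T.Relevant a u) :
    T.level (T.t.parent a) a < T.level a a :=
  hl.toNat_height_lt_toNat_height (T.meetBelow_parent_ssubset hu (hg a hrel.2.1 hrel.1) hrel)

lemma level_parent_lt (hl : ChainsLengthLE (LamH H) l) (hu : T.t.IsLeaf u)
    (hg : ∀ a, T.t.Anc a u → a ≠ T.t.root → T.IsGreedy a) {a : T.t.V}
    (hrel : T.Relevant a u) : T.level (T.t.parent a) a < l :=
  (level_parent_lt_level hl hu hg hrel).trans_le (hl.toNat_height_le _)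

lemma level_parent_lt_level_parent (hl : ChainsLengthLE (LamH H) l) (hu : T.t.IsLeaf u)
    (hg : ∀ a, T.t.Anc a u → a ≠ T.t.root → T.IsGreedy a) {a b : T.t.V}
    (hb : T.Relevant b u) (hba : T.t.Anc b a) (hne : b ≠ a)
    (hx : T.xlab (T.t.parent a) = T.xlab (T.t.parent b)) :
    T.level (T.t.parent b) b < T.level (T.t.parent a) a := by
  have hsub : T.meetBelow b (T.xlab (T.t.parent b)) ⊆
      T.meetBelow (T.t.parent a) (T.xlab (T.t.parent a)) :=
    hx ▸ T.meetBelow_mono (hba.eq_or_anc_parent.resolve_left hne) _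
  exact (level_parent_lt_level hl hu hg hb).trans_le (hl.toNat_height_mono hsub)

lemma relCount_le [Fintype X] (hl : ChainsLengthLE (LamH H) l) (hu : T.t.IsLeaf u)
    (hg : ∀ a, T.t.Anc a u → a ≠ T.t.root → T.IsGreedy a) :
    T.relCount u ≤ l * Fintype.card X := by
  let key : T.t.V → X × ℕ := fun a => (T.xlab (T.t.parent a), T.level (T.t.parent a) a)
  have hkey : Set.InjOn key {a | T.Relevant a u} := by
    intro a ha b hb hab
    obtain ⟨hx, hlevel⟩ := Prod.mk.inj hab
    by_contra hne
    rcases RTree.anc_total ha.2.1 hb.2.1 with hab | hba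
    · exact (level_parent_lt_level_parent hl hu hg ha hab hne hx.symm).ne hlevel
    · exact (level_parent_lt_level_parent hl hu hg hb hba (Ne.symm hne) hx).ne' hlevel
  calc T.relCount u
      ≤ ((Finset.univ ×ˢ Finset.range l : Finset (X × ℕ)) : Set (X × ℕ)).ncard :=
        Set.ncard_le_ncard_of_injOn key
          (fun a ha => by simpa [key] using level_parent_lt hl hu hg ha) hkey
    _ = l * Fintype.card X := by
        rw [Set.ncard_coe_finset, Finset.card_product, Finset.card_range, Finset.card_univ,
          mul_comm]

end Level

lemma rank_le [Fintype X] {l : ℕ} (hl : ChainsLengthLE (LamH H) l) :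
    T.rank ≤ l * Fintype.card X := by
  obtain ⟨u, hu, hg⟩ := T.exists_leaf_forall_isGreedy
  calc T.rank ≤ T.relCount u := Nat.sInf_le ⟨u, hu, rfl⟩
    _ ≤ l * Fintype.card X := relCount_le hl hu hg

end AmbTree

/-- if every chain in the lattice `Λ(H)` has at most `l + 1` elements
(i.e. the length of `Λ(H)` is at most `l`) and `X` is finite, then every ambiguous
shattered `H`-tree has rank at most `l·|X|`; in particular the ambiguous Littlestone
dimension is at most `|Y|·|X|`. -/
theorem rank_le_latticeLength_mul_card {X Y : Type} [Fintype X] [Fintype Y]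
    (H : Set (X → Set Y)) (l : ℕ)
    (hl : ∀ (k : ℕ) (c : Fin (k + 1) → Set Y),
      (∀ i, c i ∈ LamH H) → StrictMono c → k ≤ l) :
    (∀ T : AmbTree X Y H, T.rank ≤ l * Fintype.card X) ∧
      (∀ T : AmbTree X Y H, T.rank ≤ Fintype.card Y * Fintype.card X) := by
  exact ⟨fun T => T.rank_le hl, fun T => T.rank_le (chainsLengthLE_card _)⟩
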